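/- arXiv:1706.09718 — 6 statements merged into one kernel-verified Lean document; each statement's English description precedes it below -/
import Mathlib

section
/- Let a, b, c > 0, let X have the Kummer distribution K(a, b−a, c) and let Y have the Gamma distribution G(b, c), with X and Y independent. Define U = Y/(1+X) and V = X(1 + Y/(1+X)). Then U and V are independent, U has the Kummer distribution K(b, a−b, c) and V has the Gamma distribution G(a, c). -/
open MeasureTheory ProbabilityTheory Filter Topology Set

/-- `μ` is the Kummer distribution `K(a,b,c)`: it has a density on `(0,∞)` proportional to
`x^(a-1) (1+x)^(-(a+b)) exp (-c x)` with respect to Lebesgue measure. -/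
def IsKummer (μ : Measure ℝ) (a b c : ℝ) : Prop :=
  ∃ C : ℝ, 0 < C ∧
    μ = volume.withDensity fun x =>
      ENNReal.ofReal ((Ioi (0 : ℝ)).indicator
        (fun x => C * x ^ (a - 1) * (1 + x) ^ (-(a + b)) * Real.exp (-(c * x))) x)

/-- `μ` is the Gamma distribution `G(b,c)`: it has a density on `(0,∞)` proportional to
`y^(b-1) exp (-c y)` with respect to Lebesgue measure. -/
def IsGamma (μ : Measure ℝ) (b c : ℝ) : Prop :=
  ∃ C : ℝ, 0 < C ∧
    μ = volume.withDensity fun x =>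
      ENNReal.ofReal ((Ioi (0 : ℝ)).indicator
        (fun x => C * x ^ (b - 1) * Real.exp (-(c * x))) x)


/-! The map `(x, y) ↦ (u, v)` with `u = y / (1 + x)` and `v = x (1 + u)` is an involution of the
open quadrant with Jacobian determinant `-(1 + x + y) / (1 + x) ^ 2`. By the change of variables
formula it carries the unnormalised product density of `K(a, b - a, c) ⊗ G(b, c)` to that of
`K(b, a - b, c) ⊗ G(a, c)`: since `y = u (1 + x)` and `1 + x + y = (1 + x) (1 + u)`, the powers of
`1 + x` and `1 + u` cancel against the Jacobian, and `u + v = x + y` matches the exponentials.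
Hence the joint law of `(U, V)` is a multiple of a product measure, which gives independence and
both marginals at once; total mass one fixes the normalising constants. -/

open scoped ENNReal

noncomputable section

theorem map_withDensity_indicator_eq_of_injOn {E : Type*} [NormedAddCommGroup E]
    [NormedSpace ℝ E] [FiniteDimensional ℝ E] [MeasurableSpace E] [BorelSpace E]
    (μ : Measure E) [μ.IsAddHaarMeasure] {s : Set E} (hs : MeasurableSet s) {f : E → E}
    {f' : E → E →L[ℝ] E} (hf : Measurable f) (hf' : ∀ x ∈ s, HasFDerivWithinAt f (f' x) s x)
    (hinj : InjOn f s) {g h : E → ℝ≥0∞}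
    (hgh : ∀ x ∈ s, ENNReal.ofReal |(f' x).det| * h (f x) = g x) :
    (μ.withDensity (s.indicator g)).map f = μ.withDensity ((f '' s).indicator h) := by
  ext A hA
  have himage : f '' s ∩ A = f '' (s ∩ f ⁻¹' A) := (image_inter_preimage f s A).symm
  have hsA : MeasurableSet (s ∩ f ⁻¹' A) := hs.inter (hf hA)
  rw [Measure.map_apply hf hA, withDensity_apply _ (hf hA), withDensity_apply _ hA,
    setLIntegral_indicator hs,
    setLIntegral_indicator (measurable_image_of_fderivWithin hs hf' hinj), himage,
    lintegral_image_eq_lintegral_abs_det_fderiv_mul μ hsA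
      (fun x hx => (hf' x hx.1).mono inter_subset_left) (hinj.mono inter_subset_left)]
  exact setLIntegral_congr_fun hsA fun x hx => (hgh x hx.1).symm

theorem ENNReal.ne_top_of_mul_eq_one {a b : ℝ≥0∞} (h : a * b = 1) : a ≠ ∞ := by
  rintro rfl
  rw [ENNReal.top_mul (right_ne_zero_of_mul_eq_one h)] at h
  exact ENNReal.top_ne_one h

theorem indepFun_and_map_eq_smul_of_map_prod_eq_smul_prod {Ω α β : Type*} [MeasurableSpace Ω]
    [MeasurableSpace α] [MeasurableSpace β] {P : Measure Ω} [IsProbabilityMeasure P]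
    {U : Ω → α} {V : Ω → β} (hU : Measurable U) (hV : Measurable V)
    {μ : Measure α} {ν : Measure β} [SFinite μ] [SFinite ν] {t : ℝ≥0∞}
    (h : P.map (fun ω => (U ω, V ω)) = t • μ.prod ν) :
    IndepFun U V P ∧ (∃ r : ℝ≥0∞, r ≠ 0 ∧ r ≠ ∞ ∧ P.map U = r • μ) ∧
      ∃ r : ℝ≥0∞, r ≠ 0 ∧ r ≠ ∞ ∧ P.map V = r • ν := by
  have hmass : t * (μ univ * ν univ) = 1 := by
    rw [← measure_univ (μ := P), ← preimage_univ (f := fun ω => (U ω, V ω)),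
      ← Measure.map_apply (hU.prodMk hV) .univ, h, Measure.smul_apply, ← univ_prod_univ,
      Measure.prod_prod, smul_eq_mul]
  have hmapU : P.map U = (t * ν univ) • μ := by
    rw [show U = Prod.fst ∘ fun ω => (U ω, V ω) from rfl, ← Measure.map_map measurable_fst
      (hU.prodMk hV), h, Measure.map_smul, Measure.map_fst_prod, smul_smul]
  have hmapV : P.map V = (t * μ univ) • ν := by
    rw [show V = Prod.snd ∘ fun ω => (U ω, V ω) from rfl, ← Measure.map_map measurable_snd
      (hU.prodMk hV), h, Measure.map_smul, Measure.map_snd_prod, smul_smul]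
  have hU1 : (t * ν univ) * μ univ = 1 := by rw [← hmass]; ring
  have hV1 : (t * μ univ) * ν univ = 1 := by rw [← hmass]; ring
  refine ⟨?_, ⟨_, left_ne_zero_of_mul_eq_one hU1, ENNReal.ne_top_of_mul_eq_one hU1, hmapU⟩,
    ⟨_, left_ne_zero_of_mul_eq_one hV1, ENNReal.ne_top_of_mul_eq_one hV1, hmapV⟩⟩
  rw [indepFun_iff_map_prod_eq_prod_map_map hU.aemeasurable hV.aemeasurable, h, hmapU, hmapV,
    Measure.prod_smul_left, Measure.prod_smul_right, smul_smul]
  congr 1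
  calc t = t * (t * (μ univ * ν univ)) := by rw [hmass, mul_one]
    _ = t * ν univ * (t * μ univ) := by ring

def densityOnIoi (f : ℝ → ℝ) : Measure ℝ :=
  volume.withDensity fun x => ENNReal.ofReal ((Ioi (0 : ℝ)).indicator f x)

instance (f : ℝ → ℝ) : SigmaFinite (densityOnIoi f) := by
  unfold densityOnIoi
  infer_instance

theorem densityOnIoi_const_mul {C : ℝ} (hC : 0 ≤ C) (f : ℝ → ℝ) :
    densityOnIoi (fun x => C * f x) = ENNReal.ofReal C • densityOnIoi f := by
  rw [densityOnIoi, densityOnIoi, ← withDensity_smul' _ _ ENNReal.ofReal_ne_top]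
  congr 1
  funext x
  rw [Pi.smul_apply, smul_eq_mul, indicator_mul_right, ENNReal.ofReal_mul hC]

theorem exists_pos_densityOnIoi_const_mul_iff (μ : Measure ℝ) (f : ℝ → ℝ) :
    (∃ C : ℝ, 0 < C ∧ μ = densityOnIoi (fun x => C * f x)) ↔
      ∃ r : ℝ≥0∞, r ≠ 0 ∧ r ≠ ∞ ∧ μ = r • densityOnIoi f := by
  constructor
  · rintro ⟨C, hC, rfl⟩
    exact ⟨ENNReal.ofReal C, (ENNReal.ofReal_pos.2 hC).ne', ENNReal.ofReal_ne_top,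
      densityOnIoi_const_mul hC.le f⟩
  · rintro ⟨r, hr0, hr, rfl⟩
    refine ⟨r.toReal, ENNReal.toReal_pos hr0 hr, ?_⟩
    rw [densityOnIoi_const_mul ENNReal.toReal_nonneg, ENNReal.ofReal_toReal hr]

theorem densityOnIoi_prod {f g : ℝ → ℝ} (hf : Measurable f) (hg : Measurable g) :
    (densityOnIoi f).prod (densityOnIoi g) = volume.withDensity
      ((Ioi 0 ×ˢ Ioi 0).indicator fun p => ENNReal.ofReal (f p.1) * ENNReal.ofReal (g p.2)) := by
  rw [densityOnIoi, densityOnIoi, prod_withDensity (hf.indicator measurableSet_Ioi).ennreal_ofReal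
    (hg.indicator measurableSet_Ioi).ennreal_ofReal, ← Measure.volume_eq_prod]
  congr 1
  funext p
  by_cases hx : p.1 ∈ Ioi 0 <;> by_cases hy : p.2 ∈ Ioi 0 <;> simp [hx, hy]

def kummerDensity (a b c x : ℝ) : ℝ := x ^ (a - 1) * (1 + x) ^ (-(a + b)) * Real.exp (-(c * x))

def gammaDensity (b c y : ℝ) : ℝ := y ^ (b - 1) * Real.exp (-(c * y))

theorem measurable_kummerDensity (a b c : ℝ) : Measurable (kummerDensity a b c) := by
  unfold kummerDensity
  fun_prop

theorem measurable_gammaDensity (b c : ℝ) : Measurable (gammaDensity b c) := by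
  unfold gammaDensity
  fun_prop

theorem kummerDensity_nonneg {a b c x : ℝ} (hx : 0 < x) : 0 ≤ kummerDensity a b c x := by
  unfold kummerDensity
  positivity

theorem isKummer_iff {μ : Measure ℝ} {a b c : ℝ} : IsKummer μ a b c ↔
    ∃ r : ℝ≥0∞, r ≠ 0 ∧ r ≠ ∞ ∧ μ = r • densityOnIoi (kummerDensity a b c) := by
  rw [← exists_pos_densityOnIoi_const_mul_iff]
  simp only [IsKummer, densityOnIoi, kummerDensity, mul_assoc]

theorem isGamma_iff {μ : Measure ℝ} {b c : ℝ} : IsGamma μ b c ↔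
    ∃ r : ℝ≥0∞, r ≠ 0 ∧ r ≠ ∞ ∧ μ = r • densityOnIoi (gammaDensity b c) := by
  rw [← exists_pos_densityOnIoi_const_mul_iff]
  simp only [IsGamma, densityOnIoi, gammaDensity, mul_assoc]

def hvMap (p : ℝ × ℝ) : ℝ × ℝ := (p.2 / (1 + p.1), p.1 * (1 + p.2 / (1 + p.1)))

theorem measurable_hvMap : Measurable hvMap := by
  unfold hvMap
  fun_prop

theorem mapsTo_hvMap : MapsTo hvMap (Ioi 0 ×ˢ Ioi 0) (Ioi 0 ×ˢ Ioi 0) := by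
  rintro ⟨x, y⟩ ⟨hx : 0 < x, hy : 0 < y⟩
  exact ⟨show 0 < y / (1 + x) by positivity, show 0 < x * (1 + y / (1 + x)) by positivity⟩

theorem hvMap_hvMap {p : ℝ × ℝ} (hp : p ∈ Ioi 0 ×ˢ Ioi 0) : hvMap (hvMap p) = p := by
  obtain ⟨x, y⟩ := p
  obtain ⟨hx : 0 < x, hy : 0 < y⟩ := hp
  simp only [hvMap, Prod.mk.injEq]
  constructor <;> field_simp

theorem bijOn_hvMap : BijOn hvMap (Ioi 0 ×ˢ Ioi 0) (Ioi 0 ×ˢ Ioi 0) :=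
  InvOn.bijOn ⟨fun _ hp => hvMap_hvMap hp, fun _ hp => hvMap_hvMap hp⟩ mapsTo_hvMap mapsTo_hvMap

def fderivHvMap (p : ℝ × ℝ) : ℝ × ℝ →L[ℝ] ℝ × ℝ :=
  (Matrix.toLin (.finTwoProd ℝ) (.finTwoProd ℝ)
    !![-(p.2 / (1 + p.1) ^ 2), 1 / (1 + p.1);
      1 + p.2 / (1 + p.1) ^ 2, p.1 / (1 + p.1)]).toContinuousLinearMap

theorem hasFDerivAt_hvMap {p : ℝ × ℝ} (hp : 1 + p.1 ≠ 0) :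
    HasFDerivAt hvMap (fderivHvMap p) p := by
  have hu := (hasFDerivAt_snd (𝕜 := ℝ) (p := p)).mul
    ((hasDerivAt_inv hp).comp_hasFDerivAt p (hasFDerivAt_fst.const_add 1))
  unfold fderivHvMap
  rw [Matrix.toLin_finTwoProd_toContinuousLinearMap]
  convert! hu.prodMk (hasFDerivAt_fst.mul (hu.const_add 1)) using 2 <;> ext <;> simp
  all_goals field_simp
  ring

theorem det_fderivHvMap {p : ℝ × ℝ} (hp : 1 + p.1 ≠ 0) :
    (fderivHvMap p).det = -((1 + p.1 + p.2) / (1 + p.1) ^ 2) := by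
  rw [fderivHvMap, LinearMap.det_toContinuousLinearMap, LinearMap.det_toLin, Matrix.det_fin_two_of]
  field_simp
  ring

/- Stated in the coordinates `(x, u)`, `y = u (1 + x)`, so that every base of a real power is a
product of positive factors. -/
theorem jacobian_mul_kummerDensity_mul_gammaDensity (a b c : ℝ) {x u : ℝ} (hx : 0 < x)
    (hu : 0 < u) :
    (1 + x + u * (1 + x)) / (1 + x) ^ 2 *
        (kummerDensity b (a - b) c u * gammaDensity a c (x * (1 + u))) =
      kummerDensity a (b - a) c x * gammaDensity b c (u * (1 + x)) := by
  have hx1 : 0 < 1 + x := by linarith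
  have hu1 : 0 < 1 + u := by linarith
  have hpowu : (1 + u) ^ (-a) * (1 + u) ^ (a - 1) = (1 + u)⁻¹ := by
    rw [← Real.rpow_add hu1, ← Real.rpow_neg_one]
    ring_nf
  have hpowx : (1 + x) ^ (-b) * (1 + x) ^ (b - 1) = (1 + x)⁻¹ := by
    rw [← Real.rpow_add hx1, ← Real.rpow_neg_one]
    ring_nf
  have hexp : Real.exp (-(c * u)) * Real.exp (-(c * (x * (1 + u)))) =
      Real.exp (-(c * x)) * Real.exp (-(c * (u * (1 + x)))) := by
    rw [← Real.exp_add, ← Real.exp_add]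
    ring_nf
  simp only [kummerDensity, gammaDensity, show -(b + (a - b)) = -a by ring,
    show -(a + (b - a)) = -b by ring, Real.mul_rpow hu.le hx1.le, Real.mul_rpow hx.le hu1.le]
  calc _ = (1 + u) / (1 + x) * x ^ (a - 1) * u ^ (b - 1) * ((1 + u) ^ (-a) * (1 + u) ^ (a - 1)) *
        (Real.exp (-(c * u)) * Real.exp (-(c * (x * (1 + u))))) := by
        field_simp
    _ = x ^ (a - 1) * u ^ (b - 1) * ((1 + x) ^ (-b) * (1 + x) ^ (b - 1)) *
        (Real.exp (-(c * x)) * Real.exp (-(c * (u * (1 + x))))) := by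
        rw [hpowu, hpowx, hexp]
        field_simp
    _ = _ := by ring

theorem map_hvMap_kummer_prod_gamma (a b c : ℝ) :
    ((densityOnIoi (kummerDensity a (b - a) c)).prod (densityOnIoi (gammaDensity b c))).map hvMap =
      (densityOnIoi (kummerDensity b (a - b) c)).prod (densityOnIoi (gammaDensity a c)) := by
  rw [densityOnIoi_prod (measurable_kummerDensity _ _ _) (measurable_gammaDensity _ _),
    densityOnIoi_prod (measurable_kummerDensity _ _ _) (measurable_gammaDensity _ _)]
  conv_rhs => rw [← bijOn_hvMap.image_eq]
  refine map_withDensity_indicator_eq_of_injOn volume (measurableSet_Ioi.prod measurableSet_Ioi)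
    measurable_hvMap (fun p hp => (hasFDerivAt_hvMap ?_).hasFDerivWithinAt) bijOn_hvMap.injOn ?_
  · exact (add_pos one_pos hp.1).ne'
  rintro ⟨x, y⟩ ⟨hx : 0 < x, hy : 0 < y⟩
  have hx1 : 1 + x ≠ 0 := by positivity
  have hu : 0 < y / (1 + x) := by positivity
  have hdensity := jacobian_mul_kummerDensity_mul_gammaDensity a b c hx hu
  rw [div_mul_cancel₀ y hx1] at hdensity
  dsimp only [hvMap]
  rw [det_fderivHvMap hx1, abs_neg, abs_of_pos (by positivity),
    ← ENNReal.ofReal_mul (kummerDensity_nonneg hu), ← ENNReal.ofReal_mul (by positivity),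
    ← ENNReal.ofReal_mul (kummerDensity_nonneg hx), hdensity]

end

theorem kummer_gamma_hv_property_general
    {Ω : Type*} [MeasurableSpace Ω] {Pr : Measure Ω} [IsProbabilityMeasure Pr]
    {a b c : ℝ}
    (X Y : Ω → ℝ) (hX : Measurable X) (hY : Measurable Y)
    (hindep : IndepFun X Y Pr)
    (hlawX : IsKummer (Measure.map X Pr) a (b - a) c)
    (hlawY : IsGamma (Measure.map Y Pr) b c)
    (U V : Ω → ℝ)
    (hU : U = fun ω => Y ω / (1 + X ω))
    (hV : V = fun ω => X ω * (1 + Y ω / (1 + X ω))) :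
    IndepFun U V Pr ∧
      IsKummer (Measure.map U Pr) b (a - b) c ∧ IsGamma (Measure.map V Pr) a c := by
  obtain ⟨r, -, -, hlawX⟩ := isKummer_iff.1 hlawX
  obtain ⟨s, -, -, hlawY⟩ := isGamma_iff.1 hlawY
  have hUV : (fun ω => (U ω, V ω)) = hvMap ∘ fun ω => (X ω, Y ω) := by
    subst hU hV
    rfl
  have hlawUV : Pr.map (fun ω => (U ω, V ω)) = (r * s) •
      (densityOnIoi (kummerDensity b (a - b) c)).prod (densityOnIoi (gammaDensity a c)) := by
    rw [hUV, ← Measure.map_map measurable_hvMap (hX.prodMk hY),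
      (indepFun_iff_map_prod_eq_prod_map_map hX.aemeasurable hY.aemeasurable).1 hindep, hlawX,
      hlawY, Measure.prod_smul_left, Measure.prod_smul_right, smul_smul, Measure.map_smul,
      map_hvMap_kummer_prod_gamma]
  obtain ⟨hindepUV, hlawU, hlawV⟩ := indepFun_and_map_eq_smul_of_map_prod_eq_smul_prod
    (hU ▸ by fun_prop) (hV ▸ by fun_prop) hlawUV
  exact ⟨hindepUV, isKummer_iff.2 hlawU, isGamma_iff.2 hlawV⟩

/-- **HV independence property for Kummer and Gamma random variables.**
If `X ~ K(a, b-a, c)` and `Y ~ G(b, c)` are independent, then `U = Y/(1+X)` and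
`V = X(1 + Y/(1+X))` are independent, with `U ~ K(b, a-b, c)` and `V ~ G(a, c)`. -/
theorem kummer_gamma_hv_property
    {Ω : Type*} [MeasurableSpace Ω] {Pr : Measure Ω} [IsProbabilityMeasure Pr]
    {a b c : ℝ} (ha : 0 < a) (hb : 0 < b) (hc : 0 < c)
    (X Y : Ω → ℝ) (hX : Measurable X) (hY : Measurable Y)
    (hXpos : ∀ ω, 0 < X ω) (hYpos : ∀ ω, 0 < Y ω)
    (hindep : IndepFun X Y Pr)
    (hlawX : IsKummer (Measure.map X Pr) a (b - a) c)
    (hlawY : IsGamma (Measure.map Y Pr) b c)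
    (U V : Ω → ℝ)
    (hU : U = fun ω => Y ω / (1 + X ω))
    (hV : V = fun ω => X ω * (1 + Y ω / (1 + X ω))) :
    IndepFun U V Pr ∧
      IsKummer (Measure.map U Pr) b (a - b) c ∧ IsGamma (Measure.map V Pr) a c :=
  kummer_gamma_hv_property_general X Y hX hY hindep hlawX hlawY U V hU hV
end

section
/- Let T : Ω_+ × Ω_+ → Ω_+ × Ω_+ be defined by T(x,y) = (u,v) with u = P((e+x)^{−1/2})y and v = P((e+u)^{1/2})x. Then T is an involution: T(T(x,y)) = (x,y) for all x, y ∈ Ω_+. -/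
open Matrix

abbrev Mat (r : ℕ) : Type := Matrix (Fin r) (Fin r) ℝ

open Classical in
/-- the square root of a positive semidefinite matrix (junk value `0` otherwise) -/
noncomputable def msqrt {r : ℕ} (x : Mat r) : Mat r :=
  if h : x.PosSemidef then (h.1.eigenvectorUnitary : Mat r) *
    diagonal ((↑) ∘ (Real.sqrt ·) ∘ h.1.eigenvalues) * (star h.1.eigenvectorUnitary : Mat r) else 0

/-- the map `T(x,y) = (u, v)` with `u = P((e+x)^{-1/2}) y` and `v = P((e+u)^{1/2}) x`,
where `P(y)x = y x y` -/
noncomputable def Tmap {r : ℕ} (p : Mat r × Mat r) : Mat r × Mat r :=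
  let u := (msqrt (1 + p.1))⁻¹ * p.2 * (msqrt (1 + p.1))⁻¹
  (u, msqrt (1 + u) * p.1 * msqrt (1 + u))

/-!
Write `s = (e+x)^{1/2}` and `b = (e+u)^{1/2}`, so that `u = s⁻¹ y s⁻¹` and `v = b x b`.
Applying `T` to `(u, v)` first undoes the conjugation by `b`, giving back `x`; with `x`
recovered, the second component conjugates `u` by `s` again, giving back `y`. All that is
needed is that `s` and `b` are invertible, which holds because `e+x` and `e+u` are
positive definite.
-/

section Conjugation

variable {n R : Type*} [Fintype n] [DecidableEq n] [CommRing R]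

theorem Matrix.conj_nonsing_inv_conj {a : Matrix n n R} (ha : IsUnit a)
    (x : Matrix n n R) : a⁻¹ * (a * x * a) * a⁻¹ = x := by
  have hdet : IsUnit a.det := (isUnit_iff_isUnit_det a).mp ha
  rw [Matrix.mul_assoc a x a, ← Matrix.mul_assoc a⁻¹ a, nonsing_inv_mul _ hdet, Matrix.one_mul,
    Matrix.mul_assoc, mul_nonsing_inv _ hdet, Matrix.mul_one]

theorem Matrix.conj_conj_nonsing_inv {a : Matrix n n R} (ha : IsUnit a)
    (x : Matrix n n R) : a * (a⁻¹ * x * a⁻¹) * a = x := by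
  have hdet : IsUnit a.det := (isUnit_iff_isUnit_det a).mp ha
  simpa only [nonsing_inv_nonsing_inv a hdet] using
    conj_nonsing_inv_conj (isUnit_nonsing_inv_iff.mpr ha) x

end Conjugation

section Sqrt

variable {r : ℕ} {x : Mat r}

theorem msqrt_posSemidef (h : x.PosSemidef) : (msqrt x).PosSemidef := by
  rw [msqrt, dif_pos h, star_eq_conjTranspose]
  refine (PosSemidef.diagonal fun i => ?_).mul_mul_conjTranspose_same _
  simp [Real.sqrt_nonneg]

theorem msqrt_mul_self (h : x.PosSemidef) : msqrt x * msqrt x = x := by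
  have hU : (star h.1.eigenvectorUnitary : Mat r) * (h.1.eigenvectorUnitary : Mat r) = 1 :=
    Unitary.star_mul_self_of_mem h.1.eigenvectorUnitary.2
  rw [msqrt, dif_pos h]
  conv_rhs => rw [h.1.spectral_theorem, Unitary.conjStarAlgAut_apply]
  simp only [Matrix.mul_assoc]
  rw [← Matrix.mul_assoc (star _) (h.1.eigenvectorUnitary : Mat r), hU, Matrix.one_mul,
    ← Matrix.mul_assoc (diagonal _) (diagonal _), diagonal_mul_diagonal]
  congr 3
  funext i
  simp [Real.mul_self_sqrt (h.eigenvalues_nonneg i)]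

theorem isUnit_msqrt (h : x.PosDef) : IsUnit (msqrt x) := by
  rw [isUnit_iff_isUnit_det, ← isUnit_mul_self_iff, ← det_mul, msqrt_mul_self h.posSemidef,
    ← isUnit_iff_isUnit_det]
  exact h.isUnit

end Sqrt

theorem Tmap_Tmap_of_isUnit {r : ℕ} (x y : Mat r) (hs : IsUnit (msqrt (1 + x)))
    (hb : IsUnit (msqrt (1 + (Tmap (x, y)).1))) : Tmap (Tmap (x, y)) = (x, y) := by
  have hfst : (Tmap (Tmap (x, y))).1 = x :=
    conj_nonsing_inv_conj hb x
  refine Prod.ext hfst ?_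
  change msqrt (1 + (Tmap (Tmap (x, y))).1) * (Tmap (x, y)).1 *
    msqrt (1 + (Tmap (Tmap (x, y))).1) = y
  rw [hfst]
  exact conj_conj_nonsing_inv hs y

theorem Tmap_fst_posSemidef {r : ℕ} {x y : Mat r} (hx : x.PosDef) (hy : y.PosSemidef) :
    (Tmap (x, y)).1.PosSemidef := by
  have hs : (msqrt (1 + x))⁻¹.IsHermitian :=
    (msqrt_posSemidef (PosDef.one.add hx).posSemidef).isHermitian.inv
  have hu := hy.conjTranspose_mul_mul_same (msqrt (1 + x))⁻¹
  rwa [hs.eq] at hu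

/-- **`T` is an involution on `Ω₊ × Ω₊`:** `T(T(x,y)) = (x,y)`. -/
theorem Tmap_involutive {r : ℕ} (x y : Mat r) (hx : x.PosDef) (hy : y.PosDef) :
    Tmap (Tmap (x, y)) = (x, y) :=
  Tmap_Tmap_of_isUnit x y (isUnit_msqrt (PosDef.one.add hx))
    (isUnit_msqrt (PosDef.one.add_posSemidef (Tmap_fst_posSemidef hx hy.posSemidef)))
end

section
/- For any x ∈ Ω_+, the determinant (as an endomorphism of the vector space Ω of real r×r symmetric matrices) of the map P(x) : Ω → Ω, P(x)z = xzx, equals (det x)^{r+1}. -/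
open Matrix

lemma Matrix.IsSymm.conj {r : ℕ} {s y : Mat r} (hs : s.IsSymm) (hy : y.IsSymm) :
    (s * y * s).IsSymm := by
  unfold Matrix.IsSymm at *
  rw [transpose_mul, transpose_mul, hs, hy, ← mul_assoc]

lemma Matrix.IsHermitian.isSymm' {r : ℕ} {x : Mat r} (hx : x.IsHermitian) : x.IsSymm := by
  unfold Matrix.IsHermitian at hx
  unfold Matrix.IsSymm
  rw [← conjTranspose_eq_transpose_of_trivial, hx]

/-- the space `Ω` of real symmetric `r × r` matrices, as a submodule of all matrices -/
def SymMat (r : ℕ) : Submodule ℝ (Mat r) where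
  carrier := {x | x.IsSymm}
  add_mem' := fun ha hb => ha.add hb
  zero_mem' := Matrix.isSymm_zero
  smul_mem' := fun c x hx => by
    simp only [Set.mem_setOf_eq, Matrix.IsSymm, Matrix.transpose_smul] at *
    rw [hx]

/-- `P(x)` as an endomorphism `z ↦ x z x` of the space `Ω` of symmetric matrices -/
def Pendo {r : ℕ} (x : Mat r) (hx : x.IsSymm) : SymMat r →ₗ[ℝ] SymMat r where
  toFun z := ⟨x * (z : Mat r) * x, hx.conj z.2⟩
  map_add' z w := by
    ext1
    simp [mul_add, add_mul]
  map_smul' c z := by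
    ext1
    simp [Matrix.mul_smul, Matrix.smul_mul]

/-! Writing `x = U D Uᵀ` with `U` orthogonal and `D = diag d`, multiplicativity of
`z ↦ a z aᵀ` in `a` reduces the claim to `D`. In the coordinates `z i j` (`i ≤ j`) of `Ω` this map
is diagonal with entries `d i * d j`, and each `d i` occurs `r + 1` times among these products:
once for every `j ≥ i` and once for every `j ≤ i`. -/

open Finset

lemma card_filter_le_add_card_filter_ge {ι : Type*} [Fintype ι] [LinearOrder ι] (i : ι) :
    #{j | i ≤ j} + #{j | j ≤ i} = Fintype.card ι + 1 := by
  have hinter : ({j | i ≤ j ∧ j ≤ i} : Finset ι) = {i} := by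
    ext j; simp [le_antisymm_iff, and_comm]
  rw [← card_union_add_card_inter, ← filter_or, ← filter_and, hinter]
  simp [le_total]

lemma prod_pairs_le_mul_eq_prod_pow {ι M : Type*} [Fintype ι] [LinearOrder ι] [CommMonoid M] (d : ι → M) :
    ∏ p : {p : ι × ι // p.1 ≤ p.2}, d p.1.1 * d p.1.2 = (∏ i, d i) ^ (Fintype.card ι + 1) := by
  have hfst : ∏ p ∈ univ.filter (fun p : ι × ι => p.1 ≤ p.2), d p.1 =
      ∏ i, d i ^ #{j | i ≤ j} := by
    rw [prod_filter, Fintype.prod_prod_type]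
    exact prod_congr rfl fun i _ => by rw [← prod_filter]; exact prod_const (d i)
  have hsnd : ∏ p ∈ univ.filter (fun p : ι × ι => p.1 ≤ p.2), d p.2 =
      ∏ j, d j ^ #{i | i ≤ j} := by
    rw [prod_filter, Fintype.prod_prod_type, prod_comm]
    exact prod_congr rfl fun j _ => by rw [← prod_filter]; exact prod_const (d j)
  rw [← prod_subtype _ (fun _ => mem_filter_univ _) fun p : ι × ι => d p.1 * d p.2,
    prod_mul_distrib, hfst, hsnd, ← prod_mul_distrib, ← prod_pow]
  simp only [← pow_add, card_filter_le_add_card_filter_ge]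

namespace SymMat

variable {r : ℕ}

/-- Unlike `P a`, this is multiplicative in `a` for every `a`. -/
def congruence (a : Mat r) : SymMat r →ₗ[ℝ] SymMat r where
  toFun z := ⟨a * (z : Mat r) * aᵀ, by
    change (a * (z : Mat r) * aᵀ)ᵀ = a * (z : Mat r) * aᵀ
    rw [transpose_mul, transpose_mul, transpose_transpose, z.2.eq, mul_assoc]⟩
  map_add' z w := by ext1; simp [mul_add, add_mul]
  map_smul' c z := by ext1; simp

@[simp]
lemma coe_congruence_apply (a : Mat r) (z : SymMat r) :
    (congruence a z : Mat r) = a * (z : Mat r) * aᵀ :=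
  rfl

lemma congruence_mul (a b : Mat r) : congruence (a * b) = congruence a ∘ₗ congruence b := by
  ext z; simp [transpose_mul, mul_assoc]

lemma congruence_one : congruence (1 : Mat r) = LinearMap.id := by
  ext z; simp

lemma det_congruence_conj (a : Mat r) {v w : Mat r} (hvw : v * w = 1) :
    LinearMap.det (congruence (v * a * w)) = LinearMap.det (congruence a) := by
  have hdet : LinearMap.det (congruence v) * LinearMap.det (congruence w) = 1 := by
    rw [← LinearMap.det_comp, ← congruence_mul, hvw, congruence_one, LinearMap.det_id]
  rw [congruence_mul, congruence_mul, LinearMap.det_comp, LinearMap.det_comp,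
    mul_comm (LinearMap.det (congruence v)), mul_assoc, hdet, mul_one]

def upperCoords (r : ℕ) : SymMat r ≃ₗ[ℝ] ({p : Fin r × Fin r // p.1 ≤ p.2} → ℝ) where
  toFun z p := (z : Mat r) p.1.1 p.1.2
  map_add' z w := rfl
  map_smul' c z := rfl
  invFun f := ⟨Matrix.of fun i j => f ⟨(min i j, max i j), min_le_max⟩, by
    ext i j; simp [min_comm, max_comm]⟩
  left_inv z := by
    ext i j
    rcases le_total i j with h | h
    · simp [h]
    · simpa [h] using z.2.apply i j
  right_inv f := by
    ext ⟨⟨i, j⟩, h⟩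
    simp [h]

@[simp]
lemma upperCoords_apply (z : SymMat r) (p : {p : Fin r × Fin r // p.1 ≤ p.2}) :
    upperCoords r z p = (z : Mat r) p.1.1 p.1.2 :=
  rfl

@[simp]
lemma coe_upperCoords_symm_apply (f : {p : Fin r × Fin r // p.1 ≤ p.2} → ℝ) :
    ((upperCoords r).symm f : Mat r) = of fun i j => f ⟨(min i j, max i j), min_le_max⟩ :=
  rfl

lemma det_congruence_diagonal (d : Fin r → ℝ) :
    LinearMap.det (congruence (diagonal d)) =
      ∏ p : {p : Fin r × Fin r // p.1 ≤ p.2}, d p.1.1 * d p.1.2 := by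
  have hdiag : (upperCoords r : SymMat r →ₗ[ℝ] _) ∘ₗ congruence (diagonal d) ∘ₗ
      ((upperCoords r).symm : _ →ₗ[ℝ] SymMat r) =
      toLin' (diagonal fun p : {p : Fin r × Fin r // p.1 ≤ p.2} => d p.1.1 * d p.1.2) := by
    refine LinearMap.ext fun f => funext fun ⟨⟨i, j⟩, h⟩ => ?_
    simp [h, mulVec_diagonal]
    ring
  rw [← LinearMap.det_conj _ (upperCoords r), hdiag, LinearMap.det_toLin', det_diagonal]

lemma det_congruence_of_isHermitian {x : Mat r} (hx : x.IsHermitian) :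
    LinearMap.det (congruence x) = x.det ^ (r + 1) := by
  have hspec : x = hx.eigenvectorUnitary * diagonal hx.eigenvalues * star hx.eigenvectorUnitary :=
    hx.spectral_theorem
  calc LinearMap.det (congruence x)
      = LinearMap.det (congruence (diagonal hx.eigenvalues)) := by
        conv_lhs => rw [hspec]
        exact det_congruence_conj _ (Unitary.mul_star_self_of_mem hx.eigenvectorUnitary.2)
    _ = x.det ^ (r + 1) := by
        rw [det_congruence_diagonal, prod_pairs_le_mul_eq_prod_pow, Fintype.card_fin,
          hx.det_eq_prod_eigenvalues]
        rfl

end SymMat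

lemma Pendo_eq_congruence {r : ℕ} (x : Mat r) (hx : x.IsSymm) :
    Pendo x hx = SymMat.congruence x := by
  ext z : 2
  simp [Pendo, hx.eq]

/-- **The determinant of `P(x)` as an endomorphism of the space of symmetric matrices is
`(det x)^(r+1)`.** -/
theorem det_Pendo {r : ℕ} (x : Mat r) (hx : x.PosDef) :
    LinearMap.det (Pendo x hx.1.isSymm') = x.det ^ (r + 1) := by
  rw [Pendo_eq_congruence, SymMat.det_congruence_of_isHermitian hx.1]
end

section
/- Let f : Ω_+ → ℝ be a measurable function such that f(x) + f(y) = f(x+y) for all x, y ∈ Ω_+. Then there exists c ∈ Ω such that f(x) = ⟨c, x⟩ for all x ∈ Ω_+. -/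
open Matrix MeasureTheory

noncomputable instance (r : ℕ) : MeasurableSpace (Mat r) :=
  inferInstanceAs (MeasurableSpace (Fin r → Fin r → ℝ))

/-!
Every symmetric matrix is a difference `p - q` of positive definite ones, and additivity of `f`
on the cone makes `f p - f q` independent of the choice; this extends `f` (precomposed with the
symmetric part) to an additive, still measurable, function on all matrices. A measurable
additive map on a finite-dimensional real space is continuous, hence linear, and a linear
functional on matrices is `x ↦ tr (c x)`; `c` is symmetric because the extension does not see
the antisymmetric part.
-/

theorem sub_eq_sub_of_additiveOn {G : Type*} [AddCommGroup G] {P : G → Prop} {f : G → ℝ}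
    (hadd : ∀ x y, P x → P y → f x + f y = f (x + y)) {a b a' b' : G}
    (ha : P a) (hb : P b) (ha' : P a') (hb' : P b') (h : a - b = a' - b') :
    f a - f b = f a' - f b' := by
  have hab : a + b' = a' + b := sub_eq_sub_iff_add_eq_add.mp h
  have h₁ := hadd a b' ha hb'
  have h₂ := hadd a' b ha' hb
  rw [hab] at h₁
  linarith

namespace Matrix

section Dual

variable {n R : Type*} [DecidableEq n] [CommRing R]

def dualMatrix (L : Module.Dual R (Matrix n n R)) : Matrix n n R :=
  of fun i j => L (single j i 1)

theorem trace_dualMatrix_mul [Fintype n] (L : Module.Dual R (Matrix n n R)) (x : Matrix n n R) :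
    (dualMatrix L * x).trace = L x := by
  conv_rhs => rw [matrix_eq_sum_single x]
  simp only [map_sum, trace, diag_apply, mul_apply, dualMatrix, of_apply]
  rw [Finset.sum_comm]
  refine Finset.sum_congr rfl fun i _ => Finset.sum_congr rfl fun j _ => ?_
  rw [show single i j (x i j) = x i j • single i j 1 by rw [smul_single, smul_eq_mul, mul_one],
    map_smul, smul_eq_mul, mul_comm]

theorem isSymm_dualMatrix {L : Module.Dual R (Matrix n n R)} (hL : ∀ x, L xᵀ = L x) :
    (dualMatrix L).IsSymm := by
  ext i j
  simp [dualMatrix, ← hL (single j i 1)]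

end Dual

section EntrywiseL1

variable {n : Type*} [Fintype n]

def entrywiseL1 {m : Type*} [Fintype m] (x : Matrix m n ℝ) : ℝ := ∑ i, ∑ j, |x i j|

theorem entrywiseL1_nonneg {m : Type*} [Fintype m] (x : Matrix m n ℝ) : 0 ≤ entrywiseL1 x := by
  unfold entrywiseL1
  positivity

theorem abs_mul_abs_le_dotProduct_self (v : n → ℝ) (i j : n) : |v i| * |v j| ≤ v ⬝ᵥ v := by
  have hsq : ∀ k, v k ^ 2 ≤ v ⬝ᵥ v := fun k =>
    (sq (v k)).trans_le <| Finset.single_le_sum (f := fun k => v k * v k)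
      (fun k _ => mul_self_nonneg (v k)) (Finset.mem_univ k)
  nlinarith [hsq i, hsq j, sq_abs (v i), sq_abs (v j), sq_nonneg (|v i| - |v j|)]

theorem abs_dotProduct_mulVec_le (x : Matrix n n ℝ) (v : n → ℝ) :
    |v ⬝ᵥ x *ᵥ v| ≤ entrywiseL1 x * (v ⬝ᵥ v) :=
  calc |v ⬝ᵥ x *ᵥ v| = |∑ i, ∑ j, x i j * (v i * v j)| := by
        simp only [dotProduct, mulVec, Finset.mul_sum]
        congr 1
        refine Finset.sum_congr rfl fun i _ => Finset.sum_congr rfl fun j _ => ?_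
        ring
    _ ≤ ∑ i, ∑ j, |x i j| * (|v i| * |v j|) := by
        refine (Finset.abs_sum_le_sum_abs _ _).trans (Finset.sum_le_sum fun i _ => ?_)
        refine (Finset.abs_sum_le_sum_abs _ _).trans_eq (Finset.sum_congr rfl fun j _ => ?_)
        rw [abs_mul, abs_mul]
    _ ≤ ∑ i, ∑ j, |x i j| * (v ⬝ᵥ v) := by
        gcongr with i _ j _
        exact abs_mul_abs_le_dotProduct_self v i j
    _ = entrywiseL1 x * (v ⬝ᵥ v) := by simp only [entrywiseL1, Finset.sum_mul]

theorem posDef_add_smul_one [DecidableEq n] {x : Matrix n n ℝ} (hx : x.IsHermitian) {N : ℝ}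
    (hN : entrywiseL1 x < N) : (x + N • 1).PosDef := by
  refine posDef_iff_dotProduct_mulVec.mpr
    ⟨hx.add (isHermitian_one.smul (IsSelfAdjoint.all N)), fun v hv => ?_⟩
  have hvv : 0 < v ⬝ᵥ v := by simpa using dotProduct_star_self_pos_iff.mpr hv
  have hquad := neg_le_of_abs_le (abs_dotProduct_mulVec_le x v)
  have hexpand : star v ⬝ᵥ (x + N • 1) *ᵥ v = v ⬝ᵥ x *ᵥ v + N * (v ⬝ᵥ v) := by
    simp [add_mulVec, dotProduct_add, smul_mulVec, dotProduct_smul]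
  rw [hexpand]
  nlinarith

theorem posDef_entrywiseL1_add_one_smul_one [DecidableEq n] (x : Matrix n n ℝ) :
    ((entrywiseL1 x + 1) • 1 : Matrix n n ℝ).PosDef :=
  PosDef.one.smul (by linarith [entrywiseL1_nonneg x])

theorem exists_posDef_sub_posDef [DecidableEq n] {y : Matrix n n ℝ} (hy : y.IsHermitian) :
    ∃ p q : Matrix n n ℝ, p.PosDef ∧ q.PosDef ∧ y = p - q :=
  ⟨_, _, posDef_add_smul_one hy (lt_add_one _), posDef_entrywiseL1_add_one_smul_one y,
    (add_sub_cancel_right _ _).symm⟩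

end EntrywiseL1

end Matrix

instance (r : ℕ) : BorelSpace (Mat r) := inferInstanceAs (BorelSpace (Fin r → Fin r → ℝ))

section ConeExtension

variable {r : ℕ} {f : Mat r → ℝ}

noncomputable def coneExtension (f : Mat r → ℝ) (x : Mat r) : ℝ :=
  let y : Mat r := ↑(selfAdjointPart ℝ x)
  f (y + (entrywiseL1 y + 1) • 1) - f ((entrywiseL1 y + 1) • 1)

theorem coneExtension_transpose (x : Mat r) : coneExtension f xᵀ = coneExtension f x := by
  have hsa : selfAdjointPart ℝ xᵀ = selfAdjointPart ℝ x := by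
    ext1
    simp only [selfAdjointPart_apply_coe, star_eq_conjTranspose,
      conjTranspose_eq_transpose_of_trivial, transpose_transpose, add_comm]
  simp only [coneExtension, hsa]

theorem measurable_coneExtension (hmeas : Measurable ({x : Mat r | x.PosDef}.domRestrict f)) :
    Measurable (coneExtension f) := by
  have hcomp : ∀ g : Mat r → Mat r, Continuous g → (∀ x, (g x).PosDef) →
      Measurable fun x => f (g x) := fun g hg hpos =>
    hmeas.comp (hg.measurable.subtype_mk (h := hpos))
  have hy : Continuous fun x : Mat r => (selfAdjointPart ℝ x : Mat r) :=
    continuous_subtype_val.comp (continuous_selfAdjointPart ℝ (Mat r))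
  have hshift : Continuous fun x : Mat r =>
      ((entrywiseL1 (selfAdjointPart ℝ x : Mat r) + 1) • 1 : Mat r) := by
    unfold entrywiseL1
    fun_prop
  exact (hcomp _ (hy.add hshift)
      fun x => posDef_add_smul_one (selfAdjointPart ℝ x).2 (lt_add_one _)).sub
    (hcomp _ hshift fun x => posDef_entrywiseL1_add_one_smul_one _)

variable (hadd : ∀ x y : Mat r, x.PosDef → y.PosDef → f x + f y = f (x + y))
include hadd

theorem coneExtension_eq_sub {x p q : Mat r} (hp : p.PosDef) (hq : q.PosDef)
    (h : (selfAdjointPart ℝ x : Mat r) = p - q) : coneExtension f x = f p - f q := by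
  set y : Mat r := ↑(selfAdjointPart ℝ x)
  have hy : y.IsHermitian := (selfAdjointPart ℝ x).2
  refine sub_eq_sub_of_additiveOn hadd (posDef_add_smul_one hy (lt_add_one _))
    (posDef_entrywiseL1_add_one_smul_one y) hp hq ?_
  rw [← h, add_sub_cancel_right]

theorem coneExtension_add (x y : Mat r) :
    coneExtension f (x + y) = coneExtension f x + coneExtension f y := by
  obtain ⟨p, q, hp, hq, hx⟩ := exists_posDef_sub_posDef (selfAdjointPart ℝ x).2
  obtain ⟨p', q', hp', hq', hy⟩ := exists_posDef_sub_posDef (selfAdjointPart ℝ y).2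
  rw [coneExtension_eq_sub hadd hp hq hx, coneExtension_eq_sub hadd hp' hq' hy,
    coneExtension_eq_sub hadd (hp.add hp') (hq.add hq')
      (by rw [map_add, AddSubgroup.coe_add, hx, hy]; abel),
    ← hadd p p' hp hp', ← hadd q q' hq hq']
  ring

theorem coneExtension_of_posDef {x : Mat r} (hx : x.PosDef) : coneExtension f x = f x := by
  have hsa : (selfAdjointPart ℝ x : Mat r) = x + 1 - 1 := by
    rw [add_sub_cancel_right]
    exact hx.isHermitian.isSelfAdjoint.coe_selfAdjointPart_apply ℝ
  rw [coneExtension_eq_sub hadd (hx.add PosDef.one) PosDef.one hsa, ← hadd x 1 hx PosDef.one,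
    add_sub_cancel_right]

end ConeExtension

theorem additive_cauchy_on_cone_general {r : ℕ} (f : Mat r → ℝ)
    (hmeas : Measurable ({x : Mat r | x.PosDef}.restrict f))
    (hadd : ∀ x y : Mat r, x.PosDef → y.PosDef → f x + f y = f (x + y)) :
    ∃ c : Mat r, c.IsSymm ∧ ∀ x : Mat r, x.PosDef → f x = (c * x).trace := by
  let g : Mat r →+ ℝ := AddMonoidHom.mk' (coneExtension f) (coneExtension_add hadd)
  -- `Mat r` carries no norm instance; its topology is that of the sup norm on `Fin r → Fin r → ℝ`.
  have hg : Continuous g := Measure.AddMonoidHom.continuous_of_measurable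
    (G := Fin r → Fin r → ℝ) g (measurable_coneExtension hmeas)
  let L : Module.Dual ℝ (Mat r) := g.toRealLinearMap hg
  refine ⟨dualMatrix L, isSymm_dualMatrix coneExtension_transpose, fun x hx => ?_⟩
  rw [trace_dualMatrix_mul, ← coneExtension_of_posDef hadd hx]
  rfl

/-- **Additive Cauchy equation on the cone `Ω₊`.** A measurable function on `Ω₊` satisfying
`f(x) + f(y) = f(x+y)` is of the form `f(x) = ⟨c, x⟩ = tr(c x)` for some symmetric `c`. -/
theorem additive_cauchy_on_cone {r : ℕ} (hr : 1 ≤ r) (f : Mat r → ℝ)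
    (hmeas : Measurable ({x : Mat r | x.PosDef}.restrict f))
    (hadd : ∀ x y : Mat r, x.PosDef → y.PosDef → f x + f y = f (x + y)) :
    ∃ c : Mat r, c.IsSymm ∧ ∀ x : Mat r, x.PosDef → f x = (c * x).trace :=
  additive_cauchy_on_cone_general f hmeas hadd
end

section
/- Let c ∈ Ω_+ satisfy ⟨c, P(u)v²⟩ = ⟨c, P(v)u²⟩ for all u, v ∈ Ω_+. Then there exists λ > 0 such that c = λ·e. -/
open Matrix

/-!
Substituting `1 + u` for `u` and subtracting the original identity linearises the hypothesis to
`tr (c ⁅v, ⁅v, a⁆⁆) = 0` for positive definite `a`, `v`. The double commutator does not change when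
scalars are added to `a` or `v`, and every symmetric matrix becomes positive definite after such a
shift, so the identity holds for all symmetric `a`, `v`. Testing it on elementary symmetric
matrices shows that `c` has vanishing off-diagonal and equal diagonal entries.
-/

section ShiftInvariance

variable {R A : Type*} [CommRing R] [Ring A] [Algebra R A]

theorem add_smul_one_lie (x y : A) (t : R) : ⁅x + t • (1 : A), y⁆ = ⁅x, y⁆ := by
  simp [Ring.lie_def, add_mul, mul_add]

theorem lie_add_smul_one (x y : A) (t : R) : ⁅x, y + t • (1 : A)⁆ = ⁅x, y⁆ := by
  simp [Ring.lie_def, add_mul, mul_add]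

theorem lie_lie_add_smul_one (v a : A) (s t : R) :
    ⁅v + s • (1 : A), ⁅v + s • (1 : A), a + t • (1 : A)⁆⁆ = ⁅v, ⁅v, a⁆⁆ := by
  rw [add_smul_one_lie, add_smul_one_lie, lie_add_smul_one]

end ShiftInvariance

namespace Matrix

variable {n : Type*} [DecidableEq n]

section Single

variable {R : Type*}

theorem isHermitian_single_same [Semiring R] [StarRing R] (i : n) :
    (single i i (1 : R)).IsHermitian := by
  simp [IsHermitian]

theorem isHermitian_single_add_single [Semiring R] [StarRing R] (i j : n) :
    (single i j (1 : R) + single j i 1).IsHermitian := by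
  simp [IsHermitian, add_comm]

variable [Fintype n] [CommRing R]

theorem lie_lie_single_same_single_add_single {i j : n} (hij : i ≠ j) :
    ⁅single i i (1 : R), ⁅single i i (1 : R), single i j (1 : R) + single j i 1⁆⁆
      = single i j 1 + single j i 1 := by
  simp [Ring.lie_def, mul_add, add_mul, mul_sub, sub_mul, single_mul_single_same,
    single_mul_single_of_ne, hij, hij.symm]

theorem lie_lie_single_add_single_single_same {i j : n} (hij : i ≠ j) :
    ⁅single i j (1 : R) + single j i 1, ⁅single i j (1 : R) + single j i 1, single i i (1 : R)⁆⁆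
      = single i i 2 - single j j 2 := by
  simp only [Ring.lie_def, add_mul, mul_add, mul_sub, sub_mul, single_mul_single_same,
    single_mul_single_of_ne, ne_eq, hij, hij.symm, not_false_eq_true, mul_one, zero_add, add_zero,
    sub_zero, zero_sub]
  rw [← one_add_one_eq_two, single_add, single_add]
  abel

end Single

variable [Fintype n]

theorem IsHermitian.exists_posDef_add_smul_one {a : Matrix n n ℝ} (ha : a.IsHermitian) :
    ∃ μ : ℝ, (a + μ • 1).PosDef := by
  obtain ⟨m, hm⟩ := a.finite_real_spectrum.bddBelow
  have hpsd : (a + (-m) • 1).PosSemidef := by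
    refine posSemidef_iff_isHermitian_and_spectrum_nonneg.mpr ⟨ha.add ?_, ?_⟩
    · simp [IsHermitian]
    rw [← Algebra.algebraMap_eq_smul_one, ← spectrum.add_singleton_eq]
    rintro _ ⟨s, hs, _, rfl, rfl⟩
    simpa [← sub_eq_add_neg] using hm hs
  exact ⟨-m + 1, by simpa [add_smul, add_assoc] using PosDef.posSemidef_add hpsd PosDef.one⟩

theorem trace_mul_lie_lie_eq_zero_of_posDef {c : Matrix n n ℝ}
    (h : ∀ u v : Matrix n n ℝ, u.PosDef → v.PosDef →
      (c * (u * (v * v) * u)).trace = (c * (v * (u * u) * v)).trace)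
    {a v : Matrix n n ℝ} (ha : a.PosDef) (hv : v.PosDef) : (c * ⁅v, ⁅v, a⁆⁆).trace = 0 := by
  have h₁ := h (1 + a) v (PosDef.one.add ha) hv
  have h₀ := h a v ha hv
  simp only [Ring.lie_def, mul_add, add_mul, mul_sub, sub_mul, mul_one, one_mul, trace_add,
    trace_sub, mul_assoc] at h₀ h₁ ⊢
  linear_combination h₁ - h₀

theorem trace_mul_lie_lie_eq_zero_of_isHermitian {c : Matrix n n ℝ}
    (h : ∀ a v : Matrix n n ℝ, a.PosDef → v.PosDef → (c * ⁅v, ⁅v, a⁆⁆).trace = 0)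
    {a v : Matrix n n ℝ} (ha : a.IsHermitian) (hv : v.IsHermitian) :
    (c * ⁅v, ⁅v, a⁆⁆).trace = 0 := by
  obtain ⟨s, hs⟩ := hv.exists_posDef_add_smul_one
  obtain ⟨t, ht⟩ := ha.exists_posDef_add_smul_one
  simpa only [lie_lie_add_smul_one] using h _ _ ht hs

theorem eq_smul_one_of_trace_mul_lie_lie_eq_zero {c : Matrix n n ℝ} (hc : c.IsHermitian)
    (h : ∀ a v : Matrix n n ℝ, a.IsHermitian → v.IsHermitian → (c * ⁅v, ⁅v, a⁆⁆).trace = 0)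
    (k : n) : c = c k k • 1 := by
  have hsymm : ∀ i j, c j i = c i j := fun i j => by simpa using hc.apply i j
  have hoff : ∀ i j, i ≠ j → c i j = 0 := by
    intro i j hij
    have := h _ _ (isHermitian_single_add_single i j) (isHermitian_single_same i)
    rw [lie_lie_single_same_single_add_single hij, mul_add, trace_add, trace_mul_single,
      trace_mul_single, hsymm] at this
    simpa using this
  have hdiag : ∀ i j, c i i = c j j := by
    intro i j
    rcases eq_or_ne i j with rfl | hij
    · rfl
    have := h _ _ (isHermitian_single_same i) (isHermitian_single_add_single i j)
    rw [lie_lie_single_add_single_single_same hij, mul_sub, trace_sub, trace_mul_single,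
      trace_mul_single] at this
    simp only [MulOpposite.op_ofNat, MulOpposite.smul_eq_mul_unop, MulOpposite.unop_ofNat] at this
    linarith
  ext i j
  rcases eq_or_ne i j with rfl | hij
  · simp [hdiag i k]
  · simp [hoff i j hij, hij]

end Matrix

/-- **If `c ∈ Ω₊` satisfies `⟨c, P(u)v²⟩ = ⟨c, P(v)u²⟩` for all `u, v ∈ Ω₊`, then `c` is a
positive multiple of the identity.**  Here `⟨a,b⟩ = tr(ab)` and `P(u)x = u x u`. -/
theorem multiple_of_identity {r : ℕ} (hr : 1 ≤ r) (c : Mat r) (hc : c.PosDef)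
    (h : ∀ u v : Mat r, u.PosDef → v.PosDef →
      (c * (u * (v * v) * u)).trace = (c * (v * (u * u) * v)).trace) :
    ∃ lam : ℝ, 0 < lam ∧ c = lam • (1 : Mat r) := by
  let k : Fin r := ⟨0, hr⟩
  have hlin : ∀ a v : Mat r, a.IsHermitian → v.IsHermitian → (c * ⁅v, ⁅v, a⁆⁆).trace = 0 :=
    fun _ _ ha hv => trace_mul_lie_lie_eq_zero_of_isHermitian
      (fun _ _ ha' hv' => trace_mul_lie_lie_eq_zero_of_posDef h ha' hv') ha hv
  exact ⟨c k k, hc.diag_pos, eq_smul_one_of_trace_mul_lie_lie_eq_zero hc.isHermitian hlin k⟩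
end

section
/- Let a, b, c, d : (0,∞) → ℝ be continuous functions such that a(x) + b(y) = c(y/(1+x)) + d(x(1 + y/(1+x))) for all x, y ∈ (0,∞). Then there exist constants α, β, γ, δ ∈ ℝ and c₁, c₂, c₃, c₄ ∈ ℝ with c₁ + c₂ = c₃ + c₄ such that for all x > 0: a(x) = β·log x − γ·x − α·log(1+x) + c₁, b(x) = α·log x − δ·x + c₂, c(x) = α·log x − δ·x − β·log(1+x) + c₃, and d(x) = β·log x − γ·x + c₄. -/
/-!
Substituting `y = u (1 + x)` makes the equation symmetric under `(a, b, x) ↔ (c, d, u)`.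
Comparing it at `(2ρ - 1, v/2)` and `(1, v/2)` shows that `b (ρ v) - b v` has a limit as
`v → 0⁺`, continuous in `ρ` and additive under multiplication of `ρ`, hence equal to `α log ρ`;
symmetrically `d` gives some `β`. Letting `u → 0⁺` expresses `a` through `d` and `c` through `b`,
and then `b - α log` and `d - β log` satisfy the same equation with `a = d`, `c = b`. In that
equation at `(p / y, y)`, letting `y → ∞` shows that the increments of `d - β log` do not depend
on the base point, so by Cauchy's equation `d - β log` is affine; so is `b - α log`, with the same
slope.
-/

open Set Filter Topology Real

lemma tendsto_const_mul_nhdsGT_zero {σ : ℝ} (hσ : 0 < σ) :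
    Tendsto (σ * ·) (𝓝[>] 0) (𝓝[>] 0) :=
  tendsto_iff_comap.2 (comap_mulLeft_nhdsGT_zero hσ).ge

lemma ContinuousOn.tendsto_comp_mul_one_add {f : ℝ → ℝ} (hf : ContinuousOn f (Ioi 0)) {x : ℝ}
    (hx : 0 < x) {α : Type*} {l : Filter α} {g : α → ℝ} (hg : Tendsto g l (𝓝 0)) :
    Tendsto (fun t => f (x * (1 + g t))) l (𝓝 (f x)) := by
  have harg : Tendsto (fun t => x * (1 + g t)) l (𝓝 x) := by
    simpa using (tendsto_const_nhds (x := x)).mul ((tendsto_const_nhds (x := (1 : ℝ))).add hg)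
  exact (hf.continuousAt (Ioi_mem_nhds hx)).tendsto.comp harg

lemma eq_mul_of_continuousOn_of_map_add {f : ℝ → ℝ} (hf : ContinuousOn f (Ioi 0))
    (hadd : ∀ s > 0, ∀ t > 0, f (s + t) = f s + f t) : ∀ x > 0, f x = f 1 * x := by
  have hnsmul : ∀ n : ℕ, 0 < n → ∀ x > 0, f (n * x) = n * f x := by
    intro n hn
    induction n, hn using Nat.le_induction with
    | base => simp
    | succ n hn ih =>
      intro x hx
      rw [Nat.cast_succ, add_mul, one_mul, hadd _ (by positivity) x hx, ih x hx]
      ring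
  have hrat : ∀ q : ℚ, 0 < (q : ℝ) → f q = f 1 * q := by
    intro q hq
    have hnum : 0 < q.num := Rat.num_pos.2 (by exact_mod_cast hq)
    have hq' : (q : ℝ) = q.num.natAbs / q.den := by
      rw [Rat.cast_def, Nat.cast_natAbs, abs_of_pos (by exact_mod_cast hnum)]
    have hden : (0 : ℝ) < q.den := by exact_mod_cast q.pos
    have key : (q.den : ℝ) * f q = q.den * (f 1 * q) := by
      rw [← hnsmul _ q.pos _ hq, hq', mul_div_cancel₀ _ hden.ne',
        ← mul_one (q.num.natAbs : ℝ), hnsmul _ (Int.natAbs_pos.2 hnum.ne') 1 one_pos]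
      field_simp
    exact mul_left_cancel₀ hden.ne' key
  have hdense : Ioi (0 : ℝ) ⊆ closure (Ioi 0 ∩ range ((↑) : ℚ → ℝ)) :=
    Rat.denseRange_cast.open_subset_closure_inter isOpen_Ioi
  have heq : EqOn f (f 1 * ·) (Ioi 0) :=
    EqOn.of_subset_closure (by rintro _ ⟨hx, q, rfl⟩; exact hrat q hx) hf (by fun_prop)
      inter_subset_left hdense
  exact fun x hx => heq hx

lemma exists_affine_of_continuousOn_of_increment {g : ℝ → ℝ} (hg : ContinuousOn g (Ioi 0))
    (hinc : ∀ z > 0, ∀ δ > 0, g (z + δ) - g z = g (1 + δ) - g 1) :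
    ∃ m k, ∀ z > 0, g z = m * z + k := by
  have hmaps : MapsTo (fun δ : ℝ => 1 + δ) (Ioi 0) (Ioi 0) :=
    fun δ (hδ : 0 < δ) => show 0 < 1 + δ by linarith
  have hlin := eq_mul_of_continuousOn_of_map_add (f := fun δ => g (1 + δ) - g 1)
    ((hg.comp (by fun_prop) hmaps).sub continuousOn_const) fun s hs t ht => by
      have := hinc (1 + s) (by positivity) t ht
      rw [add_assoc] at this
      linarith
  refine ⟨g (1 + 1) - g 1, g 1 - (g (1 + 1) - g 1), fun z hz => ?_⟩
  rcases lt_trichotomy z 1 with hlt | rfl | hgt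
  · have := hinc z hz (1 - z) (by linarith)
    rw [add_sub_cancel, hlin (1 - z) (by linarith)] at this
    linarith
  · ring
  · have := hlin (z - 1) (by linarith)
    rw [add_sub_cancel] at this
    linarith

lemma eq_mul_log_of_continuousOn_of_map_mul {L : ℝ → ℝ} (hL : ContinuousOn L (Ioi 1))
    (hmul : ∀ ρ > 1, ∀ σ > 1, L (ρ * σ) = L ρ + L σ) : ∀ ρ > 1, L ρ = L (exp 1) * log ρ := by
  have hexp : MapsTo exp (Ioi 0) (Ioi 1) := fun _ ht => one_lt_exp_iff.2 ht
  have hlin := eq_mul_of_continuousOn_of_map_add (hL.comp continuous_exp.continuousOn hexp)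
    fun s hs t ht => by simp only [Function.comp_apply, exp_add, hmul _ (hexp hs) _ (hexp ht)]
  intro ρ hρ
  simpa [exp_log (zero_lt_one.trans hρ)] using hlin (log ρ) (log_pos hρ)

def HasLogRatioLimit (b : ℝ → ℝ) (α : ℝ) : Prop :=
  ∀ ρ > 0, Tendsto (fun v => b (ρ * v) - b v) (𝓝[>] 0) (𝓝 (α * log ρ))

lemma ContinuousOn.sub_mul_log {f : ℝ → ℝ} (hf : ContinuousOn f (Ioi 0)) (μ : ℝ) :
    ContinuousOn (fun t => f t - μ * Real.log t) (Ioi 0) := by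
  fun_prop (disch := exact fun t (ht : 0 < t) => ht.ne')

lemma HasLogRatioLimit.sub_mul_log {b : ℝ → ℝ} {α : ℝ} (hb : HasLogRatioLimit b α) (β : ℝ) :
    HasLogRatioLimit (fun t => b t - β * log t) (α - β) := by
  intro ρ hρ
  have hlim := (hb ρ hρ).sub_const (β * log ρ)
  rw [← sub_mul] at hlim
  refine hlim.congr' ?_
  filter_upwards [self_mem_nhdsWithin] with v (hv : 0 < v)
  rw [log_mul hρ.ne' hv.ne']
  ring

lemma exists_hasLogRatioLimit {b L : ℝ → ℝ} (hL : ContinuousOn L (Ioi 1))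
    (hlim : ∀ ρ > 1, Tendsto (fun v => b (ρ * v) - b v) (𝓝[>] 0) (𝓝 (L ρ))) :
    ∃ α, HasLogRatioLimit b α := by
  have hmul : ∀ ρ > 1, ∀ σ > 1, L (ρ * σ) = L ρ + L σ := by
    intro ρ hρ σ hσ
    have hsum := ((hlim ρ hρ).comp (tendsto_const_mul_nhdsGT_zero (zero_lt_one.trans hσ))).add
      (hlim σ hσ)
    refine tendsto_nhds_unique (hlim _ (one_lt_mul_of_lt_of_le hρ hσ.le)) (hsum.congr fun v => ?_)
    simp only [Function.comp_apply, mul_assoc]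
    ring
  have hlog := eq_mul_log_of_continuousOn_of_map_mul hL hmul
  refine ⟨L (exp 1), fun ρ hρ => ?_⟩
  rcases lt_trichotomy ρ 1 with hlt | rfl | hgt
  · have hinv : 1 < ρ⁻¹ := (one_lt_inv₀ hρ).2 hlt
    have hneg := ((hlim _ hinv).comp (tendsto_const_mul_nhdsGT_zero hρ)).neg
    rw [hlog _ hinv, log_inv, mul_neg, neg_neg] at hneg
    refine hneg.congr fun v => ?_
    simp [inv_mul_cancel_left₀ hρ.ne']
  · simp
  · rw [← hlog ρ hgt]
    exact hlim ρ hgt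

/-- The equation of the theorem after the substitution `y = u * (1 + x)`; in this form it is
symmetric under `(a, b, x) ↔ (c, d, u)`. -/
def SolvesFE (a b c d : ℝ → ℝ) : Prop :=
  ∀ x > 0, ∀ u > 0, a x + b (u * (1 + x)) = c u + d (x * (1 + u))

namespace SolvesFE

variable {a b c d : ℝ → ℝ}

lemma symm (h : SolvesFE a b c d) : SolvesFE c d a b :=
  fun x hx u hu => (h u hu x hx).symm

lemma exists_hasLogRatioLimit (h : SolvesFE a b c d) (ha : ContinuousOn a (Ioi 0))
    (hd : ContinuousOn d (Ioi 0)) : ∃ α, HasLogRatioLimit b α := by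
  refine _root_.exists_hasLogRatioLimit (L := fun ρ => d (2 * ρ - 1) - d 1 - (a (2 * ρ - 1) - a 1))
    ?_ fun ρ hρ => ?_
  · have hmaps : MapsTo (fun ρ : ℝ => 2 * ρ - 1) (Ioi 1) (Ioi 0) :=
      fun ρ (hρ : 1 < ρ) => show 0 < 2 * ρ - 1 by linarith
    exact ((hd.comp (by fun_prop) hmaps).sub continuousOn_const).sub
      ((ha.comp (by fun_prop) hmaps).sub continuousOn_const)
  · -- compare the equation at `(2ρ - 1, v/2)` with the one at `(1, v/2)`
    have hident : ∀ v > 0, b (ρ * v) - b v =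
        d ((2 * ρ - 1) * (1 + v / 2)) - d (1 * (1 + v / 2)) - (a (2 * ρ - 1) - a 1) := by
      intro v hv
      have h₁ := h (2 * ρ - 1) (by linarith) (v / 2) (by positivity)
      have h₂ := h 1 one_pos (v / 2) (by positivity)
      rw [show v / 2 * (1 + (2 * ρ - 1)) = ρ * v by ring] at h₁
      rw [show v / 2 * (1 + 1) = v by ring] at h₂
      linarith
    have hv : Tendsto (fun v : ℝ => v / 2) (𝓝[>] 0) (𝓝 0) := by
      simpa using ((tendsto_id (x := 𝓝 (0 : ℝ))).div_const 2).mono_left nhdsWithin_le_nhds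
    refine (((hd.tendsto_comp_mul_one_add (by linarith) hv).sub
      (hd.tendsto_comp_mul_one_add one_pos hv)).sub_const _).congr' ?_
    filter_upwards [self_mem_nhdsWithin] with v hv using (hident v hv).symm

lemma exists_eq_sub_log (h : SolvesFE a b c d) (hd : ContinuousOn d (Ioi 0)) {α : ℝ}
    (hb : HasLogRatioLimit b α) : ∃ κ, (∀ x > 0, a x = d x - α * log (1 + x) + κ) ∧
      Tendsto (fun u => c u - b u) (𝓝[>] 0) (𝓝 κ) := by
  have hlim : ∀ x > 0, Tendsto (fun u => c u - b u) (𝓝[>] 0)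
      (𝓝 (a x + α * log (1 + x) - d x)) := by
    intro x hx
    have hu : Tendsto (fun u : ℝ => u) (𝓝[>] 0) (𝓝 0) := tendsto_id.mono_left nhdsWithin_le_nhds
    refine (((hb (1 + x) (by positivity)).const_add (a x)).sub
      (hd.tendsto_comp_mul_one_add hx hu)).congr' ?_
    filter_upwards [self_mem_nhdsWithin] with u (hu : 0 < u)
    have := h x hx u hu
    rw [mul_comm u] at this
    linarith
  refine ⟨a 1 + α * log (1 + 1) - d 1, fun x hx => ?_, hlim 1 one_pos⟩
  linarith [tendsto_nhds_unique (hlim x hx) (hlim 1 one_pos)]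

lemma exists_log_normal_form (h : SolvesFE a b c d) (ha : ContinuousOn a (Ioi 0))
    (hb : ContinuousOn b (Ioi 0)) (hc : ContinuousOn c (Ioi 0)) (hd : ContinuousOn d (Ioi 0)) :
    ∃ α β κ, HasLogRatioLimit b α ∧ HasLogRatioLimit d β ∧
      (∀ x > 0, a x = d x - α * log (1 + x) + κ) ∧ ∀ u > 0, c u = b u - β * log (1 + u) + κ := by
  obtain ⟨α, hα⟩ := h.exists_hasLogRatioLimit ha hd
  obtain ⟨β, hβ⟩ := h.symm.exists_hasLogRatioLimit hc hb
  obtain ⟨κ, hax, hcb⟩ := h.exists_eq_sub_log hd hα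
  obtain ⟨κ', hcu, -⟩ := h.symm.exists_eq_sub_log hb hβ
  have hcb' : Tendsto (fun u => c u - b u) (𝓝[>] 0) (𝓝 κ') := by
    have hcont : ContinuousAt (fun u : ℝ => κ' - β * log (1 + u)) 0 := by
      fun_prop (disch := norm_num)
    have hlog : Tendsto (fun u : ℝ => κ' - β * log (1 + u)) (𝓝[>] 0) (𝓝 κ') := by
      simpa using hcont.tendsto.mono_left nhdsWithin_le_nhds
    refine hlog.congr' ?_
    filter_upwards [self_mem_nhdsWithin] with u hu
    linarith [hcu u hu]
  obtain rfl := tendsto_nhds_unique hcb hcb'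
  exact ⟨α, β, κ, hα, hβ, hax, hcu⟩

lemma sub_log {α β κ : ℝ} (h : SolvesFE a b c d)
    (ha : ∀ x > 0, a x = d x - α * log (1 + x) + κ)
    (hc : ∀ u > 0, c u = b u - β * log (1 + u) + κ) :
    SolvesFE (fun t => d t - β * log t) (fun t => b t - α * log t) (fun t => b t - α * log t)
      (fun t => d t - β * log t) := by
  intro x hx u hu
  have := h x hx u hu
  rw [ha x hx, hc u hu] at this
  beta_reduce
  rw [log_mul hu.ne' (by positivity), log_mul hx.ne' (by positivity)]
  linarith

lemma tendsto_sub_atTop (h : SolvesFE d b b d) (hd : ContinuousOn d (Ioi 0))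
    (hd₀ : HasLogRatioLimit d 0) {z z' : ℝ} (hz : 0 < z) (hz' : 0 < z') :
    Tendsto (fun y => b (y + z) - b (y + z')) atTop (𝓝 (d z - d z')) := by
  -- the equation at `(p / y, y)`
  have hstep : ∀ y > 0, ∀ p > 0, b (y + p) - b y = d (p * (1 + y⁻¹)) - d (p * y⁻¹) := by
    intro y hy p hp
    have := h (p * y⁻¹) (by positivity) y hy
    rw [show y * (1 + p * y⁻¹) = y + p by field_simp,
      show p * y⁻¹ * (1 + y) = p * (1 + y⁻¹) by field_simp; ring] at this
    linarith
  have hshift := (hd.tendsto_comp_mul_one_add hz tendsto_inv_atTop_zero).sub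
    (hd.tendsto_comp_mul_one_add hz' tendsto_inv_atTop_zero)
  have hsmall := (hd₀ (z / z') (by positivity)).comp
    ((tendsto_const_mul_nhdsGT_zero hz').comp tendsto_inv_atTop_nhdsGT_zero)
  rw [zero_mul] at hsmall
  have hlim : Tendsto (fun y => d (z * (1 + y⁻¹)) - d (z' * (1 + y⁻¹)) -
      (d (z / z' * (z' * y⁻¹)) - d (z' * y⁻¹))) atTop (𝓝 (d z - d z')) := by
    simpa using hshift.sub hsmall
  refine hlim.congr' ?_
  filter_upwards [eventually_gt_atTop 0] with y hy
  rw [show z / z' * (z' * y⁻¹) = z * y⁻¹ by field_simp]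
  linarith [hstep y hy z hz, hstep y hy z' hz']

lemma exists_affine (h : SolvesFE d b b d) (hd : ContinuousOn d (Ioi 0))
    (hd₀ : HasLogRatioLimit d 0) : ∃ m k, ∀ z > 0, d z = m * z + k := by
  refine exists_affine_of_continuousOn_of_increment hd fun z hz δ hδ => ?_
  -- both sides are the limit of `b (y + (z + δ)) - b (y + z)` as `y → ∞`
  have hshift := (h.tendsto_sub_atTop hd hd₀ (by positivity : 0 < 1 + δ) one_pos).comp
    (tendsto_atTop_add_const_right atTop (z - 1) tendsto_id)
  refine tendsto_nhds_unique (h.tendsto_sub_atTop hd hd₀ (by positivity) hz)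
    (hshift.congr fun y => ?_)
  simp only [Function.comp_apply, id]
  ring_nf

end SolvesFE

/-- **The one-dimensional functional equation** `a(x) + b(y) = c(y/(1+x)) + d(x(1+y/(1+x)))`
for continuous functions on `(0,∞)` has only the stated log-linear solutions. -/
theorem one_dim_functional_equation (a b c d : ℝ → ℝ)
    (hca : ContinuousOn a (Ioi 0)) (hcb : ContinuousOn b (Ioi 0))
    (hcc : ContinuousOn c (Ioi 0)) (hcd : ContinuousOn d (Ioi 0))
    (heq : ∀ x ∈ Ioi (0 : ℝ), ∀ y ∈ Ioi (0 : ℝ),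
      a x + b y = c (y / (1 + x)) + d (x * (1 + y / (1 + x)))) :
    ∃ α β γ δ c₁ c₂ c₃ c₄ : ℝ, c₁ + c₂ = c₃ + c₄ ∧
      ∀ x ∈ Ioi (0 : ℝ),
        a x = β * Real.log x - γ * x - α * Real.log (1 + x) + c₁ ∧
        b x = α * Real.log x - δ * x + c₂ ∧
        c x = α * Real.log x - δ * x - β * Real.log (1 + x) + c₃ ∧
        d x = β * Real.log x - γ * x + c₄ := by
  have hFE : SolvesFE a b c d := fun x hx u hu => by
    have := heq x hx (u * (1 + x)) (show 0 < u * (1 + x) by positivity)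
    rwa [mul_div_cancel_right₀ u (by positivity : 1 + x ≠ 0)] at this
  obtain ⟨α, β, κ, hα, hβ, ha, hc⟩ := hFE.exists_log_normal_form hca hcb hcc hcd
  have hred := hFE.sub_log ha hc
  obtain ⟨m, k, hd⟩ := hred.exists_affine (hcd.sub_mul_log β) (by simpa using hβ.sub_mul_log β)
  obtain ⟨m', k', hb⟩ := hred.symm.exists_affine (hcb.sub_mul_log α)
    (by simpa using hα.sub_mul_log α)
  obtain rfl : m = m' := by
    have := hred 1 one_pos 1 one_pos
    have hd₁ := hd 1 one_pos
    have hb₁ := hb 1 one_pos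
    rw [log_one] at hd₁ hb₁
    norm_num at this
    linarith [hd 2 two_pos, hb 2 two_pos]
  refine ⟨α, β, -m, -m, k + κ, k', k' + κ, k, by ring, fun x hx => ?_⟩
  have hdx := hd x hx
  have hbx := hb x hx
  refine ⟨?_, ?_, ?_, ?_⟩ <;> linarith [ha x hx, hc x hx]
end
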